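/- arXiv:1810.08884 — 2 statements merged into one kernel-verified Lean document; each statement's English description precedes it below -/
import Mathlib

section
/- Let (W,S) be a Coxeter system, let v ∈ W, and let s ∈ S satisfy ℓ(vs) < ℓ(v). Let w be any reduced word for v and w' any reduced word for vs. Then for every u ∈ W: 𝓡_{u,w}(t) = 𝓡_{us,w'}(t) if ℓ(us) < ℓ(u), and 𝓡_{u,w}(t) = 𝓡_{us,w'}(t) + t·𝓡_{u,w'}(t) if ℓ(us) > ℓ(u). (That is, the diagrammatic R̃-polynomials of reduced words satisfy the classical Kazhdan–Lusztig recursion for R̃-polynomials.) -/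
open Polynomial

variable {B W : Type*} [Group W] {M : CoxeterMatrix B}

open scoped Classical in
/-- The diagrammatic R̃-polynomial, defined by recursion on the word read from its last letter.
`dRAux cs ws u` where `ws` is the reversed word. -/
noncomputable def dRAux (cs : CoxeterSystem M W) : List B → W → Polynomial ℕ
  | [], u => if u = 1 then 1 else 0
  | s :: rest, u =>
      if cs.length (u * cs.simple s) < cs.length u then
        dRAux cs rest (u * cs.simple s)
      else
        dRAux cs rest (u * cs.simple s) + Polynomial.X * dRAux cs rest u

/-- The diagrammatic R̃-polynomial `𝓡_{u,w}(t) ∈ ℕ[t]`. -/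
noncomputable def dR (cs : CoxeterSystem M W) (u : W) (w : List B) : Polynomial ℕ :=
  dRAux cs w.reverse u

/-- `w` is a reduced word for `v`. -/
def IsReducedWordFor (cs : CoxeterSystem M W) (w : List B) (v : W) : Prop :=
  cs.wordProd w = v ∧ w.length = cs.length v

/-- Bruhat order via the subword property. -/
def BruhatLE (cs : CoxeterSystem M W) (u v : W) : Prop :=
  ∃ w w' : List B, IsReducedWordFor cs w v ∧ List.Sublist w' w ∧ IsReducedWordFor cs w' u

/-!
Read from its last letter, `dR cs · w` is obtained from the indicator of `1` by applying, for each
letter `i`, the operator `Tᵢ φ u = φ (u sᵢ) + [u < u sᵢ] t φ u`. So the recursion is the defining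
one for the reduced word `w' ++ [s]` of `v`, once `dR cs u w` is known to depend only on `v`.

Each `Tᵢ` is invertible with inverse `Tᵢ - t` and commutes with its left-handed analogue `Lⱼ`.
Along reduced words lengths add, so for reduced `ω` and `m`
`∏ω (Tᵢ - t) φ (π m) = ∏m (Lⱼ - t) (∏ω (Tᵢ - t) φ) 1 = ∏ω (Tᵢ - t) (∏m (Lⱼ - t) φ) 1
  = ∏m (Lⱼ - t) φ (π ω)`,
which depends on `ω` only through `π ω`.

`Tᵢ Lⱼ = Lⱼ Tᵢ` comes down to the exchange property: `sⱼ u = u sᵢ` whenever `u < sⱼ u`,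
`u < u sᵢ` and `ℓ (sⱼ u sᵢ) = ℓ u`. This follows from Bourbaki's representation of `W` on
`W × ZMod 2`, which shows that the parity of the number of occurrences of a reflection in the left
inversion sequence of a word depends only on the product of the word.
-/

theorem mul_mul_inv_eq_iff {G : Type*} [Group G] {a x y : G} :
    a * x * a⁻¹ = y ↔ x = a⁻¹ * y * a := by
  constructor <;> rintro rfl <;> group

section ConjAdd

variable {G R : Type*} [Group G] [AddCommMonoid R]

def conjAddEnd (r : G) (c : G → R) : Function.End (G × R) :=
  fun p ↦ (r * p.1 * r⁻¹, p.2 + c p.1)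

@[simp]
theorem conjAddEnd_apply (r : G) (c : G → R) (p : G × R) :
    conjAddEnd r c p = (r * p.1 * r⁻¹, p.2 + c p.1) := rfl

theorem conjAddEnd_mul (r r' : G) (c c' : G → R) :
    conjAddEnd r c * conjAddEnd r' c' =
      conjAddEnd (r * r') (fun x ↦ c' x + c (r' * x * r'⁻¹)) := by
  funext p
  show conjAddEnd r c (conjAddEnd r' c' p) = _
  simp [mul_assoc, add_assoc]

theorem conjAddEnd_pow_apply (r : G) (c : G → R) (k : ℕ) (p : G × R) :
    (conjAddEnd r c ^ k) p =
      (r ^ k * p.1 * (r ^ k)⁻¹, p.2 + ∑ n ∈ Finset.range k, c (r ^ n * p.1 * (r ^ n)⁻¹)) := by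
  induction k generalizing p with
  | zero => show p = _; simp
  | succ k ih =>
    rw [pow_succ]
    show (conjAddEnd r c ^ k) (conjAddEnd r c p) = _
    rw [ih, Finset.sum_range_succ']
    simp only [conjAddEnd_apply, mul_assoc, pow_succ, mul_inv_rev, pow_zero, one_mul, inv_one,
      mul_one, Prod.mk.injEq, true_and]
    abel

end ConjAdd

theorem Finset.sum_range_two_mul {R : Type*} [AddCommMonoid R] (f : ℕ → R) (m : ℕ) :
    ∑ k ∈ Finset.range (2 * m), f k = ∑ n ∈ Finset.range m, (f (2 * n) + f (2 * n + 1)) := by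
  induction m with
  | zero => simp
  | succ m ih =>
    rw [Finset.sum_range_succ, ← ih, show 2 * (m + 1) = 2 * m + 1 + 1 by ring,
      Finset.sum_range_succ, Finset.sum_range_succ, add_assoc]

namespace CoxeterSystem

variable (cs : CoxeterSystem M W)

local prefix:100 "s " => cs.simple
local prefix:100 "ℓ" => cs.length
local prefix:100 "π" => cs.wordProd
local prefix:100 "lis " => cs.leftInvSeq

section ReflectionRep

open scoped Classical

noncomputable def reflectionAct (i : B) : Function.End (W × ZMod 2) :=
  conjAddEnd (s i) fun x ↦ if x = s i then 1 else 0

theorem isLiftable_reflectionAct : M.IsLiftable cs.reflectionAct := by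
  intro i j
  funext p
  show _ = p
  rw [reflectionAct, reflectionAct, conjAddEnd_mul, inv_simple, conjAddEnd_pow_apply,
    cs.simple_mul_simple_pow]
  set r := s i * s j
  have hconj (n : ℕ) : (r ^ n)⁻¹ = s j * r ^ n * s j := by
    calc (r ^ n)⁻¹ = MulAut.conj (s j) r ^ n := by rw [← inv_pow]; simp [r, mul_assoc]
      _ = MulAut.conj (s j) (r ^ n) := (map_pow _ _ _).symm
      _ = s j * r ^ n * s j := by simp
  set f : ℕ → ZMod 2 := fun k ↦ if p.1 = s j * r ^ k then 1 else 0
  have hterm (n : ℕ) :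
      ((if r ^ n * p.1 * (r ^ n)⁻¹ = s j then 1 else 0) +
        if s j * (r ^ n * p.1 * (r ^ n)⁻¹) * s j = s i then 1 else 0) =
        f (2 * n) + f (2 * n + 1) := by
    have h₁ : (r ^ n)⁻¹ * s j * r ^ n = s j * r ^ (2 * n) := by
      rw [hconj]; simp [two_mul, pow_add, mul_assoc]
    have h₂ : (r ^ n)⁻¹ * (s j * s i * s j) * r ^ n = s j * r ^ (2 * n + 1) := by
      calc (r ^ n)⁻¹ * (s j * s i * s j) * r ^ n = s j * r ^ n * r * r ^ n := by
            rw [hconj]; simp [r, mul_assoc]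
        _ = s j * r ^ (2 * n + 1) := by group
    have h₃ (y : W) : s j * y * s j = s i ↔ y = s j * s i * s j := by
      constructor
      · intro h; simp [← h, mul_assoc]
      · rintro rfl; simp [mul_assoc]
    simp only [f, h₃, mul_mul_inv_eq_iff, h₁, h₂]
  -- The correction term is `∑ k < 2m, [p.1 = sⱼ rᵏ]` and `k ↦ sⱼ rᵏ` is `m`-periodic, so every
  -- summand occurs twice.
  have hperiodic (k : ℕ) : f (M i j + k) = f k := by
    simp [f, pow_add, r, cs.simple_mul_simple_pow]
  rw [Finset.sum_congr rfl fun n _ ↦ hterm n, ← Finset.sum_range_two_mul, two_mul,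
    Finset.sum_range_add]
  simp [hperiodic, CharTwo.add_self_eq_zero]

noncomputable def reflectionRep : W →* Function.End (W × ZMod 2) :=
  cs.lift ⟨cs.reflectionAct, cs.isLiftable_reflectionAct⟩

theorem count_leftInvSeq_cons (i : B) (ω : List B) (t : W) :
    (lis (i :: ω)).count t = (lis ω).count (s i * t * s i) + if t = s i then 1 else 0 := by
  rw [leftInvSeq, List.count_cons]
  congr 1
  · convert List.count_map_of_injective _ _ (MulAut.conj (s i)).injective (s i * t * s i) using 2
    simp [mul_assoc]
  · simp only [beq_iff_eq]
    exact if_congr eq_comm rfl rfl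

theorem reflectionRep_wordProd_inv_apply (ω : List B) (t : W) (ε : ZMod 2) :
    cs.reflectionRep (π ω)⁻¹ (t, ε) = ((π ω)⁻¹ * t * π ω, ε + (lis ω).count t) := by
  induction ω generalizing t ε with
  | nil =>
    rw [wordProd_nil, inv_one, map_one]
    show (t, ε) = _
    simp
  | cons i ω ih =>
    rw [wordProd_cons, mul_inv_rev, inv_simple, map_mul]
    show cs.reflectionRep (π ω)⁻¹ (cs.reflectionRep (s i) (t, ε)) = _
    rw [reflectionRep, lift_apply_simple, ← reflectionRep, reflectionAct, conjAddEnd_apply, ih]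
    refine Prod.ext (by simp [mul_assoc]) ?_
    push_cast [count_leftInvSeq_cons, inv_simple]
    ring

theorem count_leftInvSeq_eq_of_wordProd_eq {ω ω' : List B} (h : π ω = π ω') (t : W) :
    ((lis ω).count t : ZMod 2) = (lis ω').count t := by
  have := congrArg Prod.snd (congrArg (cs.reflectionRep · (t, 0)) (congrArg Inv.inv h))
  simpa [reflectionRep_wordProd_inv_apply] using this

theorem count_leftInvSeq_eq_zero {ω : List B} (hω : cs.IsReduced ω) {t : W}
    (ht : ℓ (π ω) < ℓ (t * π ω)) : (lis ω).count t = 0 :=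
  List.count_eq_zero.mpr fun hmem ↦
    (cs.isLeftInversion_of_mem_leftInvSeq hω hmem).2.not_gt ht

theorem count_leftInvSeq_simple_of_isLeftDescent {ω : List B} {j : B}
    (hj : cs.IsLeftDescent (π ω) j) : ((lis ω).count (s j) : ZMod 2) = 1 := by
  obtain ⟨m, hm, hm_eq⟩ := cs.exists_isReduced (s j * π ω)
  have hω_eq : π ω = π (j :: m) := by rw [wordProd_cons, ← hm_eq, simple_mul_simple_cancel_left]
  have hzero : (lis m).count (s j) = 0 := by
    apply cs.count_leftInvSeq_eq_zero hm
    rwa [← hm_eq, simple_mul_simple_cancel_left]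
  simp [cs.count_leftInvSeq_eq_of_wordProd_eq hω_eq, count_leftInvSeq_cons, hzero]

theorem simple_mul_eq_mul_simple_of_length_eq {u : W} {i j : B} (hju : ℓ u < ℓ (s j * u))
    (hui : ℓ u < ℓ (u * s i)) (h : ℓ (s j * u * s i) = ℓ u) : s j * u = u * s i := by
  -- As a left descent of `u sᵢ`, `sⱼ` occurs an odd number of times in the left inversion
  -- sequence of `ω ++ [i]`; it does not occur in that of `ω`, so it is the last entry `u sᵢ u⁻¹`.
  obtain ⟨ω, hω, rfl⟩ := cs.exists_isReduced u
  have hdesc : cs.IsLeftDescent (π (ω.concat i)) j := by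
    rwa [IsLeftDescent, wordProd_concat, ← mul_assoc, h]
  have hodd := cs.count_leftInvSeq_simple_of_isLeftDescent hdesc
  rw [leftInvSeq_concat, List.concat_eq_append, List.count_append,
    cs.count_leftInvSeq_eq_zero hω hju] at hodd
  have hconj : π ω * s i * (π ω)⁻¹ = s j := by simpa [List.count_singleton] using hodd
  rw [← hconj]
  group

end ReflectionRep

theorem length_simple_mul_mul_simple {u : W} {i j : B} (h : s j * u ≠ u * s i) :
    ℓ (s j * u * s i) + ℓ u = ℓ (s j * u) + ℓ (u * s i) := by
  have hj := cs.length_simple_mul u j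
  have hi := cs.length_mul_simple u i
  have hji := cs.length_mul_simple (s j * u) i
  have hij := cs.length_simple_mul (u * s i) j
  rw [← mul_assoc] at hij
  have up (hju : ℓ u < ℓ (s j * u)) (hui : ℓ u < ℓ (u * s i)) : ℓ (s j * u * s i) ≠ ℓ u :=
    fun heq ↦ h (cs.simple_mul_eq_mul_simple_of_length_eq hju hui heq)
  have down (hju : ℓ (s j * u) < ℓ u) (hui : ℓ (u * s i) < ℓ u) : ℓ (s j * u * s i) ≠ ℓ u := by
    intro heq
    have hexch := cs.simple_mul_eq_mul_simple_of_length_eq (u := s j * u) (i := i) (j := j)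
      (by rwa [simple_mul_simple_cancel_left]) (by omega)
      (by rw [simple_mul_simple_cancel_left]; omega)
    rw [simple_mul_simple_cancel_left] at hexch
    apply h
    conv_lhs => rw [hexch]
    simp [← mul_assoc]
  omega

section Hecke

variable {R : Type*} [CommSemiring R] (q : R)

noncomputable def heckeOp (g : W → W) : Module.End R (W → R) :=
  LinearMap.funLeft R R g + LinearMap.mulLeft R fun u ↦ if ℓ (g u) < ℓ u then 0 else q

@[simp]
theorem heckeOp_apply (g : W → W) (φ : W → R) (u : W) :
    cs.heckeOp q g φ u = φ (g u) + (if ℓ (g u) < ℓ u then 0 else q) * φ u :=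
  rfl

theorem heckeOp_mul_self {g : W → W} (hg : Function.Involutive g) (hℓ : ∀ u, ℓ (g u) ≠ ℓ u) :
    cs.heckeOp q g * cs.heckeOp q g = 1 + algebraMap R _ q * cs.heckeOp q g := by
  ext φ u
  have := hℓ u
  simp only [Module.End.mul_apply, heckeOp_apply, hg u, LinearMap.add_apply,
    Module.End.one_apply, Module.algebraMap_end_apply, Pi.add_apply, Pi.smul_apply, smul_eq_mul]
  split_ifs <;> first | (exfalso; omega) | ring

theorem commute_heckeOp_mul_simple_simple_mul (i j : B) :
    Commute (cs.heckeOp q (· * s i)) (cs.heckeOp q (s j * ·)) := by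
  ext φ u
  simp only [Module.End.mul_apply, heckeOp_apply, ← mul_assoc]
  by_cases h : s j * u = u * s i
  · have h' : s j * u * s i = u := by rw [h, simple_mul_simple_cancel_right]
    rw [h', h]
  · have := cs.length_simple_mul_mul_simple h
    have := cs.length_mul_simple u i
    have := cs.length_simple_mul u j
    split_ifs <;> first | (exfalso; omega) | ring

end Hecke

section HeckeInverse

variable {R : Type*} [CommRing R] (q : R)

noncomputable def heckeOpUnit (i : B) : (Module.End R (W → R))ˣ :=
  have hsq := cs.heckeOp_mul_self q (g := (· * s i))
    (fun _ ↦ cs.simple_mul_simple_cancel_right i) (fun u ↦ cs.length_mul_simple_ne u i)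
  { val := cs.heckeOp q (· * s i)
    inv := cs.heckeOp q (· * s i) - algebraMap R _ q
    val_inv := by rw [mul_sub, hsq, ← Algebra.commutes, add_sub_cancel_right]
    inv_val := by rw [sub_mul, hsq, add_sub_cancel_right] }

theorem heckeOp_sub_apply_of_length_lt {g : W → W} {u : W} (h : ℓ u < ℓ (g u)) (φ : W → R) :
    (cs.heckeOp q g - algebraMap R _ q) φ u = φ (g u) := by
  simp [h.not_gt]

theorem prod_map_heckeOp_sub_apply {ω : List B} {x : W} (h : ℓ (x * π ω) = ℓ x + ω.length)
    (φ : W → R) :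
    (ω.map fun i ↦ cs.heckeOp q (· * s i) - algebraMap R _ q).prod φ x = φ (x * π ω) := by
  induction ω generalizing x with
  | nil => simp
  | cons i ω ih =>
    have h₁ := cs.length_mul_le (x * s i) (π ω)
    have h₂ := cs.length_wordProd_le ω
    have h₃ := cs.length_mul_simple x i
    rw [wordProd_cons, ← mul_assoc, List.length_cons] at h
    rw [List.map_cons, List.prod_cons, Module.End.mul_apply,
      cs.heckeOp_sub_apply_of_length_lt q (g := (· * s i)) (by omega), ih (by omega), wordProd_cons,
      mul_assoc]

theorem prod_map_reverse_heckeOp_sub_apply {ω : List B} {x : W}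
    (h : ℓ (π ω * x) = ω.length + ℓ x) (φ : W → R) :
    (ω.reverse.map fun j ↦ cs.heckeOp q (s j * ·) - algebraMap R _ q).prod φ x = φ (π ω * x) := by
  induction ω generalizing φ with
  | nil => simp
  | cons j ω ih =>
    have h₁ := cs.length_mul_le (π ω) x
    have h₂ := cs.length_wordProd_le ω
    have h₃ := cs.length_simple_mul (π ω * x) j
    rw [wordProd_cons, mul_assoc, List.length_cons] at h
    rw [List.reverse_cons, List.map_append, List.prod_append, Module.End.mul_apply, ih (by omega),
      List.map_singleton, List.prod_singleton,
      cs.heckeOp_sub_apply_of_length_lt q (g := (s j * ·)) (by omega), wordProd_cons, mul_assoc]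

theorem commute_heckeOp_sub (i j : B) :
    Commute (cs.heckeOp q (· * s i) - algebraMap R _ q)
      (cs.heckeOp q (s j * ·) - algebraMap R _ q) :=
  ((cs.commute_heckeOp_mul_simple_simple_mul q i j).sub_right
    (Algebra.commute_algebraMap_right _ _)).sub_left (Algebra.commute_algebraMap_left _ _)

theorem prod_map_heckeOp_sub_eq_of_wordProd_eq {ω ω' : List B} (hω : cs.IsReduced ω)
    (hω' : cs.IsReduced ω') (h : π ω = π ω') :
    (ω.map fun i ↦ cs.heckeOp q (· * s i) - algebraMap R _ q).prod =
      (ω'.map fun i ↦ cs.heckeOp q (· * s i) - algebraMap R _ q).prod := by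
  have key {ω : List B} (hω : cs.IsReduced ω) {m : List B} (hm : cs.IsReduced m) (φ : W → R) :
      (ω.map fun i ↦ cs.heckeOp q (· * s i) - algebraMap R _ q).prod φ (π m) =
        (m.reverse.map fun j ↦ cs.heckeOp q (s j * ·) - algebraMap R _ q).prod φ (π ω) := by
    set P := (ω.map fun i ↦ cs.heckeOp q (· * s i) - algebraMap R _ q).prod
    set Q := (m.reverse.map fun j ↦ cs.heckeOp q (s j * ·) - algebraMap R _ q).prod
    have hcomm : Commute P Q :=
      Commute.list_prod_left _ _ fun _ ha ↦ Commute.list_prod_right _ _ fun _ hb ↦ by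
        obtain ⟨i, -, rfl⟩ := List.mem_map.mp ha
        obtain ⟨j, -, rfl⟩ := List.mem_map.mp hb
        exact cs.commute_heckeOp_sub q i j
    have hQ : Q (P φ) 1 = P φ (π m) := by
      have := cs.prod_map_reverse_heckeOp_sub_apply q (x := 1) (by simpa using hm.eq) (P φ)
      rwa [mul_one] at this
    have hP : P (Q φ) 1 = Q φ (π ω) := by
      have := cs.prod_map_heckeOp_sub_apply q (x := 1) (by simpa using hω.eq) (Q φ)
      rwa [one_mul] at this
    rw [← hQ, ← hP, ← Module.End.mul_apply, ← hcomm.eq, Module.End.mul_apply]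
  refine LinearMap.ext fun φ ↦ funext fun y ↦ ?_
  obtain ⟨m, hm, rfl⟩ := cs.exists_isReduced y
  rw [key hω hm, key hω' hm, h]

theorem prod_map_reverse_heckeOp_eq_of_wordProd_eq {ω ω' : List B} (hω : cs.IsReduced ω)
    (hω' : cs.IsReduced ω') (h : π ω = π ω') :
    (ω.reverse.map fun i ↦ cs.heckeOp q (· * s i)).prod =
      (ω'.reverse.map fun i ↦ cs.heckeOp q (· * s i)).prod := by
  have hval (ω : List B) : ((ω.map fun i ↦ (cs.heckeOpUnit q i)⁻¹).prod : Module.End R (W → R)) =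
      (ω.map fun i ↦ cs.heckeOp q (· * s i) - algebraMap R _ q).prod := by
    rw [← Units.coeHom_apply, map_list_prod, List.map_map]
    rfl
  have hinv (ω : List B) : (ω.reverse.map fun i ↦ cs.heckeOp q (· * s i)).prod =
      ((ω.map fun i ↦ (cs.heckeOpUnit q i)⁻¹).prod⁻¹ : (Module.End R (W → R))ˣ) := by
    rw [List.prod_inv_reverse, List.map_map, ← List.map_reverse, ← Units.coeHom_apply,
      map_list_prod, List.map_map]
    rfl
  have hunits : (ω.map fun i ↦ (cs.heckeOpUnit q i)⁻¹).prod =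
      (ω'.map fun i ↦ (cs.heckeOpUnit q i)⁻¹).prod :=
    Units.ext (by rw [hval, hval, cs.prod_map_heckeOp_sub_eq_of_wordProd_eq q hω hω' h])
  rw [hinv, hinv, hunits]

end HeckeInverse

end CoxeterSystem

theorem IsReducedWordFor.isReduced {cs : CoxeterSystem M W} {w : List B} {v : W}
    (hw : IsReducedWordFor cs w v) : cs.IsReduced w := by
  rw [CoxeterSystem.IsReduced, hw.1, hw.2]

theorem IsReducedWordFor.append_singleton {cs : CoxeterSystem M W} {w : List B} {v : W} {s : B}
    (hw : IsReducedWordFor cs w (v * cs.simple s))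
    (hvs : cs.length (v * cs.simple s) < cs.length v) :
    IsReducedWordFor cs (w ++ [s]) v := by
  refine ⟨by simp [CoxeterSystem.wordProd_append, hw.1], ?_⟩
  have := cs.length_mul_simple v s
  simp only [List.length_append, List.length_singleton, hw.2]
  omega

-- The inverses `Tᵢ - t` need subtraction, so we compare images in `ℤ[X]`.
open scoped Classical in
theorem dRAux_map_eq_prod_heckeOp (cs : CoxeterSystem M W) (l : List B) (u : W) :
    (dRAux cs l u).map (Nat.castRingHom ℤ) =
      (l.map fun i ↦ cs.heckeOp X (· * cs.simple i)).prod (Pi.single 1 1) u := by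
  induction l generalizing u with
  | nil =>
    simp only [dRAux, List.map_nil, List.prod_nil, Module.End.one_apply, Pi.single_apply]
    split_ifs <;> simp
  | cons i l ih =>
    simp only [dRAux, List.map_cons, List.prod_cons, Module.End.mul_apply,
      CoxeterSystem.heckeOp_apply]
    split_ifs <;> simp [ih]

theorem dR_append_singleton (cs : CoxeterSystem M W) (u : W) (w : List B) (s : B) :
    dR cs u (w ++ [s]) =
      if cs.length (u * cs.simple s) < cs.length u then dR cs (u * cs.simple s) w
      else dR cs (u * cs.simple s) w + X * dR cs u w := by
  simp [dR, dRAux]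

theorem dR_eq_of_isReducedWordFor (cs : CoxeterSystem M W) {v : W} {w w' : List B}
    (hw : IsReducedWordFor cs w v) (hw' : IsReducedWordFor cs w' v) (u : W) :
    dR cs u w = dR cs u w' := by
  apply Polynomial.map_injective (Nat.castRingHom ℤ) Nat.cast_injective
  simp only [dR, dRAux_map_eq_prod_heckeOp]
  rw [cs.prod_map_reverse_heckeOp_eq_of_wordProd_eq X hw.isReduced hw'.isReduced
    (hw.1.trans hw'.1.symm)]

/-- The diagrammatic R̃-polynomials of reduced words satisfy the classical Kazhdan–Lusztig
recursion for R̃-polynomials. -/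
theorem dR_recursion (cs : CoxeterSystem M W) (v : W) (s : B)
    (hvs : cs.length (v * cs.simple s) < cs.length v)
    (w w' : List B) (hw : IsReducedWordFor cs w v)
    (hw' : IsReducedWordFor cs w' (v * cs.simple s)) (u : W) :
    (cs.length (u * cs.simple s) < cs.length u →
      dR cs u w = dR cs (u * cs.simple s) w') ∧
    (cs.length u < cs.length (u * cs.simple s) →
      dR cs u w = dR cs (u * cs.simple s) w' + Polynomial.X * dR cs u w') := by
  rw [dR_eq_of_isReducedWordFor cs hw (hw'.append_singleton hvs), dR_append_singleton]
  exact ⟨fun h ↦ if_pos h, fun h ↦ if_neg h.not_gt⟩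
end

section
/- Let (W,S) be a Coxeter system, let u, v ∈ W with u ≤ v in the Bruhat order, and let w be a reduced word for v. Then 𝓡_{u,w}(t) is a monic polynomial of degree ℓ(v) − ℓ(u). -/
/-!
Write `S(ω)` for the set of products of subwords of a word `ω` (reduced or not). For
`ω = ω' ++ [s]` one has `u ∈ S(ω) ↔ u ∈ S(ω') ∨ us ∈ S(ω')`, and `S(ω')` is closed under right
descents `u ↦ us` by the exchange property. Feeding this into the defining recursion shows, by
induction on an arbitrary word `ω`, that `𝓡_{u,ω}` vanishes for `u ∉ S(ω)` and is monic of degree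
`|ω| - ℓ(u)` for `u ∈ S(ω)`; in the ascent case the term `t·𝓡_{u,ω'}` has the top degree.

It remains to see that `S(w)` is the same for all reduced words `w` of `v`. Both agree with the
Bruhat interval below `v`, where Bruhat order is generated by `x < xt` for reflections `t` with
`ℓ(x) < ℓ(xt)`: subword products of a reduced word lie below `v` by the lifting property, and every
element below `v` lies in `S(w)` for every word `w` of `v` by the strong exchange property. Strong
exchange comes from Tits' action of `W` on `W × ℤ/2`, in which `s` sends `(t, ε)` to
`(sts, ε + [t = s])`: its second coordinate counts, mod 2, the occurrences of `t` in the right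
inversion sequence of a word.
-/

open Polynomial

variable {B W : Type*} [Group W] {M : CoxeterMatrix B}

namespace CoxeterSystem

variable (cs : CoxeterSystem M W)

local prefix:100 "σ" => cs.simple
local prefix:100 "π" => cs.wordProd
local prefix:100 "ℓ" => cs.length

open scoped Classical

noncomputable def simpleReflMap (i : B) (p : W × ZMod 2) : W × ZMod 2 :=
  (σ i * p.1 * σ i, p.2 + if p.1 = σ i then 1 else 0)

theorem simpleReflMap_involutive (i : B) : Function.Involutive (cs.simpleReflMap i) := by
  rintro ⟨t, e⟩
  by_cases ht : t = σ i
  · subst ht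
    simp [simpleReflMap, add_assoc, CharTwo.add_self_eq_zero]
  · simp [simpleReflMap, ht, mul_assoc, mul_eq_one_iff_eq_inv, cs.inv_simple]

noncomputable def simpleReflPerm (i : B) : Equiv.Perm (W × ZMod 2) :=
  (cs.simpleReflMap_involutive i).toPerm _

theorem simpleReflPerm_apply (i : B) (t : W) (e : ZMod 2) :
    cs.simpleReflPerm i (t, e) = (σ i * t * σ i, e + if t = σ i then 1 else 0) := rfl

theorem simpleReflPerm_mul_pow_apply (i j : B) (k : ℕ) (t : W) (e : ZMod 2) :
    ((cs.simpleReflPerm i * cs.simpleReflPerm j) ^ k) (t, e) =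
      ((σ i * σ j) ^ k * t * ((σ i * σ j) ^ k)⁻¹,
        e + ∑ n ∈ Finset.range (2 * k), if t = (σ j * σ i) ^ n * σ j then 1 else 0) := by
  induction k generalizing t e with
  | zero => simp
  | succ k ih =>
    have hq : (σ i * σ j)⁻¹ = σ j * σ i := by simp [cs.inv_simple]
    have conj_iff (a x y : W) : a * x * a⁻¹ = y ↔ x = a⁻¹ * y * a := by
      constructor <;> rintro rfl <;> group
    have hshift (n : ℕ) : σ i * (σ j * t * σ j) * σ i = (σ j * σ i) ^ n * σ j ↔
        t = (σ j * σ i) ^ (n + 1 + 1) * σ j := by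
      rw [show σ i * (σ j * t * σ j) * σ i = (σ i * σ j) * t * (σ i * σ j)⁻¹ by
        simp only [hq, mul_assoc], conj_iff, hq, pow_succ, pow_succ']
      simp only [mul_assoc]
    have hone : σ j * t * σ j = σ i ↔ t = (σ j * σ i) ^ (0 + 1) * σ j := by
      nth_rw 2 [← cs.inv_simple j]
      rw [conj_iff, zero_add, pow_one, cs.inv_simple]
    rw [pow_succ, Equiv.Perm.mul_apply, Equiv.Perm.mul_apply, simpleReflPerm_apply,
      simpleReflPerm_apply, ih]
    ext
    · rw [pow_succ, mul_inv_rev, hq]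
      simp only [mul_assoc]
    · rw [show 2 * (k + 1) = 2 * k + 1 + 1 by ring, Finset.sum_range_succ',
        Finset.sum_range_succ']
      simp only [hshift, hone, pow_zero, one_mul]
      abel

theorem isLiftable_simpleReflPerm : M.IsLiftable cs.simpleReflPerm := by
  intro i j
  ext ⟨t, e⟩ : 1
  have hq : (σ j * σ i) ^ M i j = 1 := cs.simple_mul_simple_pow' i j
  rw [simpleReflPerm_mul_pow_apply, cs.simple_mul_simple_pow, two_mul, Finset.sum_range_add]
  simp only [pow_add, hq, one_mul, inv_one, mul_one, CharTwo.add_self_eq_zero, add_zero,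
    Equiv.Perm.one_apply]

noncomputable def reflPerm : W →* Equiv.Perm (W × ZMod 2) :=
  cs.lift ⟨cs.simpleReflPerm, cs.isLiftable_simpleReflPerm⟩

theorem reflPerm_simple (i : B) : cs.reflPerm (σ i) = cs.simpleReflPerm i :=
  cs.lift_apply_simple cs.isLiftable_simpleReflPerm i

noncomputable def inversionParity (w t : W) : ZMod 2 := (cs.reflPerm w (t, 0)).2

theorem reflPerm_apply (w t : W) (e : ZMod 2) :
    cs.reflPerm w (t, e) = (w * t * w⁻¹, e + cs.inversionParity w t) := by
  induction w using cs.simple_induction_left generalizing t e with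
  | one => simp [inversionParity]
  | mul_simple_left w i ih =>
    have hparity : cs.inversionParity (σ i * w) t =
        cs.inversionParity w t + if w * t * w⁻¹ = σ i then 1 else 0 := by
      rw [inversionParity, map_mul, Equiv.Perm.mul_apply, ih, reflPerm_simple,
        simpleReflPerm_apply, zero_add]
    rw [map_mul, Equiv.Perm.mul_apply, ih, reflPerm_simple, simpleReflPerm_apply, hparity,
      mul_inv_rev, cs.inv_simple]
    simp only [mul_assoc, add_assoc]

theorem inversionParity_mul (a b t : W) :
    cs.inversionParity (a * b) t = cs.inversionParity b t + cs.inversionParity a (b * t * b⁻¹) := by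
  rw [inversionParity, map_mul, Equiv.Perm.mul_apply, reflPerm_apply, reflPerm_apply, zero_add]

theorem inversionParity_simple (i : B) (t : W) :
    cs.inversionParity (σ i) t = if t = σ i then 1 else 0 := by
  simp [inversionParity, reflPerm_simple, simpleReflPerm_apply]

theorem inversionParity_wordProd (ω : List B) (t : W) :
    cs.inversionParity (π ω) t = ((cs.rightInvSeq ω).count t : ZMod 2) := by
  induction ω with
  | nil => simp [inversionParity]
  | cons i ω ih =>
    have hiff : π ω * t * (π ω)⁻¹ = σ i ↔ (π ω)⁻¹ * σ i * π ω = t := by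
      constructor <;> intro h <;> rw [← h] <;> group
    rw [wordProd_cons, inversionParity_mul, ih, inversionParity_simple, rightInvSeq,
      List.count_cons]
    simp [hiff]

theorem inversionParity_self {t : W} (ht : cs.IsReflection t) : cs.inversionParity t t = 1 := by
  obtain ⟨x, i, rfl⟩ := ht
  have hconj : x⁻¹ * (x * σ i * x⁻¹) * x⁻¹⁻¹ = σ i := by group
  have hcancel := cs.inversionParity_mul x x⁻¹ (x * σ i * x⁻¹)
  rw [mul_inv_cancel, hconj] at hcancel
  rw [cs.inversionParity_mul (x * σ i), cs.inversionParity_mul x, inversionParity_simple, hconj,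
    if_pos rfl, mul_inv_cancel_right]
  have hone : cs.inversionParity 1 (x * σ i * x⁻¹) = 0 := by simp [inversionParity]
  linear_combination hone - hcancel

theorem mem_rightInvSeq_of_inversionParity_eq_one {ω : List B} {t : W}
    (h : cs.inversionParity (π ω) t = 1) : t ∈ cs.rightInvSeq ω := by
  rw [inversionParity_wordProd] at h
  refine List.count_pos_iff.mp (Nat.pos_of_ne_zero fun h0 ↦ ?_)
  simp [h0] at h

theorem inversionParity_eq_one_iff {w t : W} (ht : cs.IsReflection t) :
    cs.inversionParity w t = 1 ↔ ℓ (w * t) < ℓ w := by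
  have descent_of_eq_one {w : W} (h : cs.inversionParity w t = 1) : ℓ (w * t) < ℓ w := by
    obtain ⟨ω, hω, rfl⟩ := cs.exists_isReduced w
    exact (cs.isRightInversion_of_mem_rightInvSeq hω
      (cs.mem_rightInvSeq_of_inversionParity_eq_one h)).2
  refine ⟨descent_of_eq_one, fun h ↦ ?_⟩
  by_contra hne
  have h0 : cs.inversionParity w t = 0 := by
    revert hne; generalize cs.inversionParity w t = a; revert a; decide
  have hwt : cs.inversionParity (w * t) t = 1 := by
    rw [inversionParity_mul, cs.inversionParity_self ht, mul_inv_cancel_right, h0, add_zero]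
  have := descent_of_eq_one hwt
  rw [mul_assoc, ht.mul_self, mul_one] at this
  omega

theorem exists_eraseIdx_wordProd_eq_mul (ω : List B) {t : W}
    (ht : cs.IsRightInversion (π ω) t) : ∃ j < ω.length, π (ω.eraseIdx j) = π ω * t := by
  have hmem := cs.mem_rightInvSeq_of_inversionParity_eq_one
    ((cs.inversionParity_eq_one_iff ht.1).mpr ht.2)
  obtain ⟨j, hj, rfl⟩ := List.mem_iff_getElem.mp hmem
  refine ⟨j, by simpa using hj, ?_⟩
  rw [← wordProd_mul_getD_rightInvSeq, List.getD_eq_getElem]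

def subwordProds (ω : List B) : Set W := {u | ∃ c, c.Sublist ω ∧ π c = u}

theorem wordProd_mem_subwordProds (ω : List B) : π ω ∈ cs.subwordProds ω :=
  ⟨ω, List.Sublist.refl ω, rfl⟩

theorem subwordProds_mono {ω ω' : List B} (h : ω.Sublist ω') :
    cs.subwordProds ω ⊆ cs.subwordProds ω' :=
  fun _ ⟨c, hc, hu⟩ ↦ ⟨c, hc.trans h, hu⟩

theorem mem_subwordProds_nil {u : W} : u ∈ cs.subwordProds [] ↔ u = 1 := by
  simp [subwordProds, eq_comm]

theorem length_le_of_mem_subwordProds {ω : List B} {u : W} (hu : u ∈ cs.subwordProds ω) :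
    ℓ u ≤ ω.length := by
  obtain ⟨c, hc, rfl⟩ := hu
  exact (cs.length_wordProd_le c).trans hc.length_le

theorem mem_subwordProds_concat {ω : List B} {i : B} {u : W} :
    u ∈ cs.subwordProds (ω ++ [i]) ↔ u ∈ cs.subwordProds ω ∨ u * σ i ∈ cs.subwordProds ω := by
  constructor
  · rintro ⟨c, hc, rfl⟩
    obtain ⟨c₁, c₂, rfl, hc₁, hc₂⟩ := List.sublist_append_iff.mp hc
    rcases List.sublist_singleton.mp hc₂ with rfl | rfl
    · exact Or.inl ⟨c₁, hc₁, by simp⟩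
    · exact Or.inr ⟨c₁, hc₁, by simp [wordProd_append, cs.simple_mul_simple_cancel_right]⟩
  · rintro (hu | ⟨c, hc, hu⟩)
    · exact cs.subwordProds_mono (List.sublist_append_left ω [i]) hu
    · exact ⟨c ++ [i], hc.append (List.Sublist.refl [i]),
        by rw [wordProd_append, hu, wordProd_singleton, cs.simple_mul_simple_cancel_right]⟩

theorem mul_simple_mem_subwordProds {ω : List B} {u : W} {i : B} (hu : u ∈ cs.subwordProds ω)
    (h : cs.IsRightDescent u i) : u * σ i ∈ cs.subwordProds ω := by
  obtain ⟨c, hc, rfl⟩ := hu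
  obtain ⟨j, -, hj⟩ := cs.exists_eraseIdx_wordProd_eq_mul c ⟨cs.isReflection_simple i, h⟩
  exact ⟨c.eraseIdx j, (c.eraseIdx_sublist j).trans hc, hj⟩

theorem mem_subwordProds_concat_of_not_isRightDescent {ω : List B} {i : B} {u : W}
    (h : ¬cs.IsRightDescent u i) :
    u ∈ cs.subwordProds (ω ++ [i]) ↔ u ∈ cs.subwordProds ω := by
  refine ⟨fun hu ↦ ?_, fun hu ↦ cs.mem_subwordProds_concat.mpr (Or.inl hu)⟩
  rcases cs.mem_subwordProds_concat.mp hu with hu | hu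
  · exact hu
  · have hdesc : cs.IsRightDescent (u * σ i) i :=
      cs.isRightDescent_iff_not_isRightDescent_mul.mpr (by rwa [cs.simple_mul_simple_cancel_right])
    simpa only [cs.simple_mul_simple_cancel_right] using cs.mul_simple_mem_subwordProds hu hdesc

theorem mem_subwordProds_concat_of_isRightDescent {ω : List B} {i : B} {u : W}
    (h : cs.IsRightDescent u i) :
    u ∈ cs.subwordProds (ω ++ [i]) ↔ u * σ i ∈ cs.subwordProds ω := by
  refine ⟨fun hu ↦ ?_, fun hu ↦ cs.mem_subwordProds_concat.mpr (Or.inr hu)⟩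
  rcases cs.mem_subwordProds_concat.mp hu with hu | hu
  · exact cs.mul_simple_mem_subwordProds hu h
  · exact hu

def BruhatStep (x y : W) : Prop := ∃ t, cs.IsReflection t ∧ ℓ x < ℓ y ∧ x * t = y

abbrev BruhatChain : W → W → Prop := Relation.ReflTransGen cs.BruhatStep

theorem bruhatStep_mul_simple {x : W} {i : B} (h : ¬cs.IsRightDescent x i) :
    cs.BruhatStep x (x * σ i) :=
  ⟨σ i, cs.isReflection_simple i, by rw [not_isRightDescent_iff] at h; omega, rfl⟩

theorem mem_subwordProds_of_bruhatChain {u v : W} (h : cs.BruhatChain u v) {ω : List B}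
    (hω : π ω = v) : u ∈ cs.subwordProds ω := by
  induction h generalizing ω with
  | refl => exact hω ▸ cs.wordProd_mem_subwordProds ω
  | @tail y _ _ hstep ih =>
    obtain ⟨t, ht, hlt, rfl⟩ := hstep
    have hcancel : π ω * t = y := by rw [hω, mul_assoc, ht.mul_self, mul_one]
    obtain ⟨j, -, hj⟩ := cs.exists_eraseIdx_wordProd_eq_mul ω ⟨ht, by rwa [hcancel, hω]⟩
    exact cs.subwordProds_mono (ω.eraseIdx_sublist j) (ih (hj.trans hcancel))

/- `hsub` is the subword property for reduced words of length at most `n`: the two lifting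
lemmas below and the subword property are proved by one joint induction on length. -/
theorem bruhatChain_mul_simple_of_isRightDescent {n : ℕ}
    (hsub : ∀ ω, cs.IsReduced ω → ω.length ≤ n → ∀ u ∈ cs.subwordProds ω,
      cs.BruhatChain u (π ω))
    {x y : W} {i : B} (h : cs.BruhatChain x y) (hy : ℓ y ≤ n) (hx : ¬cs.IsRightDescent x i)
    (hyi : cs.IsRightDescent y i) : cs.BruhatChain (x * σ i) y := by
  obtain ⟨ρ, hρ, hρy⟩ := cs.exists_isReduced (y * σ i)
  have hy_eq : π (ρ ++ [i]) = y := by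
    rw [wordProd_append, ← hρy, wordProd_singleton, cs.simple_mul_simple_cancel_right]
  have hlen : (ρ ++ [i]).length = ℓ y := by
    rw [List.length_append, List.length_singleton, ← hρ.eq, ← hρy, cs.isRightDescent_iff.mp hyi]
  have hred : cs.IsReduced (ρ ++ [i]) := by rw [IsReduced, hy_eq, hlen]
  have hxρ : x ∈ cs.subwordProds ρ := (cs.mem_subwordProds_concat_of_not_isRightDescent hx).mp
    (cs.mem_subwordProds_of_bruhatChain h hy_eq)
  have hxi : x * σ i ∈ cs.subwordProds (ρ ++ [i]) :=
    cs.mem_subwordProds_concat.mpr (Or.inr (by rwa [cs.simple_mul_simple_cancel_right]))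
  exact hy_eq ▸ hsub _ hred (hlen ▸ hy) _ hxi

theorem bruhatChain_mul_simple_mul_simple {n : ℕ}
    (hsub : ∀ ω, cs.IsReduced ω → ω.length ≤ n → ∀ u ∈ cs.subwordProds ω,
      cs.BruhatChain u (π ω))
    {x y : W} {i : B} (h : cs.BruhatChain x y) (hy : ℓ y ≤ n) (hx : ¬cs.IsRightDescent x i)
    (hyi : ¬cs.IsRightDescent y i) : cs.BruhatChain (x * σ i) (y * σ i) := by
  induction h with
  | refl => exact Relation.ReflTransGen.refl
  | @tail y' _ hchain hstep ih =>
    obtain ⟨t, ht, hlt, rfl⟩ := hstep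
    by_cases hy' : cs.IsRightDescent y' i
    · have := cs.bruhatChain_mul_simple_of_isRightDescent hsub hchain (by omega) hx hy'
      exact (this.tail ⟨t, ht, hlt, rfl⟩).tail (cs.bruhatStep_mul_simple hyi)
    · have hconj : cs.IsReflection (σ i * t * σ i) := by
        simpa [cs.inv_simple] using ht.conj (σ i)
      have hprod : y' * σ i * (σ i * t * σ i) = y' * t * σ i := by
        simp [mul_assoc, cs.simple_mul_simple_cancel_left]
      refine (ih (by omega) hy').tail ⟨σ i * t * σ i, hconj, ?_, hprod⟩
      rw [not_isRightDescent_iff] at hy' hyi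
      omega

theorem bruhatChain_of_mem_subwordProds {ω : List B} (hω : cs.IsReduced ω) {u : W}
    (hu : u ∈ cs.subwordProds ω) : cs.BruhatChain u (π ω) := by
  induction hn : ω.length using Nat.strong_induction_on generalizing ω u with
  | _ n ih =>
  rcases List.eq_nil_or_concat' ω with rfl | ⟨ρ, i, rfl⟩
  · obtain rfl := cs.mem_subwordProds_nil.mp hu
    exact Relation.ReflTransGen.refl
  have hlen : ρ.length < n := by simp [← hn]
  have hsub : ∀ ω, cs.IsReduced ω → ω.length ≤ ρ.length → ∀ u ∈ cs.subwordProds ω,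
      cs.BruhatChain u (π ω) :=
    fun ω hω hle u hu ↦ ih ω.length (by omega) hω hu rfl
  have hρ : cs.IsReduced ρ := by simpa using hω.take ρ.length
  have hasc : ¬cs.IsRightDescent (π ρ) i := by
    have := hω.eq
    rw [wordProd_append, wordProd_singleton, List.length_append, List.length_singleton,
      ← hρ.eq] at this
    rwa [not_isRightDescent_iff]
  rw [wordProd_append, wordProd_singleton]
  rcases cs.mem_subwordProds_concat.mp hu with hu | hu
  · exact (hsub ρ hρ le_rfl u hu).tail (cs.bruhatStep_mul_simple hasc)
  · have hchain := hsub ρ hρ le_rfl _ hu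
    by_cases hdesc : cs.IsRightDescent u i
    · have := cs.bruhatChain_mul_simple_mul_simple hsub hchain (cs.length_wordProd_le ρ)
        (cs.isRightDescent_iff_not_isRightDescent_mul.mp hdesc) hasc
      rwa [cs.simple_mul_simple_cancel_right] at this
    · exact (Relation.ReflTransGen.head (cs.bruhatStep_mul_simple hdesc) hchain).tail
        (cs.bruhatStep_mul_simple hasc)

end CoxeterSystem

section DiagrammaticR

variable (cs : CoxeterSystem M W)

local prefix:100 "σ" => cs.simple
local prefix:100 "ℓ" => cs.length

theorem dR_concat_of_isRightDescent {u : W} {i : B} (ω : List B) (h : cs.IsRightDescent u i) :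
    dR cs u (ω ++ [i]) = dR cs (u * σ i) ω := by
  simp only [dR, List.reverse_append, List.reverse_singleton, List.singleton_append, dRAux]
  exact if_pos h

theorem dR_concat_of_not_isRightDescent {u : W} {i : B} (ω : List B)
    (h : ¬cs.IsRightDescent u i) :
    dR cs u (ω ++ [i]) = dR cs (u * σ i) ω + X * dR cs u ω := by
  simp only [dR, List.reverse_append, List.reverse_singleton, List.singleton_append, dRAux]
  exact if_neg h

theorem dR_eq_zero_of_notMem_subwordProds {ω : List B} {u : W}
    (hu : u ∉ cs.subwordProds ω) : dR cs u ω = 0 := by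
  induction ω using List.reverseRecOn generalizing u with
  | nil => simpa [dR, dRAux, cs.mem_subwordProds_nil] using hu
  | append_singleton ω i ih =>
    rw [cs.mem_subwordProds_concat, not_or] at hu
    by_cases h : cs.IsRightDescent u i
    · rw [dR_concat_of_isRightDescent cs ω h, ih hu.2]
    · rw [dR_concat_of_not_isRightDescent cs ω h, ih hu.1, ih hu.2, mul_zero, add_zero]

theorem dR_monic_of_mem_subwordProds {ω : List B} {u : W} (hu : u ∈ cs.subwordProds ω) :
    (dR cs u ω).Monic ∧ (dR cs u ω).natDegree = ω.length - ℓ u := by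
  induction ω using List.reverseRecOn generalizing u with
  | nil =>
    obtain rfl := cs.mem_subwordProds_nil.mp hu
    simp [dR, dRAux]
  | append_singleton ω i ih =>
    rw [List.length_append, List.length_singleton]
    by_cases h : cs.IsRightDescent u i
    · have hu' := (cs.mem_subwordProds_concat_of_isRightDescent h).mp hu
      have hlen := cs.length_le_of_mem_subwordProds hu'
      obtain ⟨hmon, hdeg⟩ := ih hu'
      rw [dR_concat_of_isRightDescent cs ω h]
      rw [cs.isRightDescent_iff] at h
      exact ⟨hmon, by omega⟩
    · have hu' := (cs.mem_subwordProds_concat_of_not_isRightDescent h).mp hu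
      obtain ⟨hmon, hdeg⟩ := ih hu'
      have hlen := cs.length_le_of_mem_subwordProds hu'
      have hXmon : (X * dR cs u ω).Monic := monic_X.mul hmon
      have hXdeg : (X * dR cs u ω).natDegree = ω.length - ℓ u + 1 := by
        rw [monic_X.natDegree_mul hmon, natDegree_X, hdeg, add_comm]
      have hsmall : (dR cs (u * σ i) ω).natDegree ≤ ω.length - ℓ u := by
        by_cases hmem : u * σ i ∈ cs.subwordProds ω
        · rw [(ih hmem).2, cs.not_isRightDescent_iff.mp h]
          omega
        · rw [dR_eq_zero_of_notMem_subwordProds cs hmem, natDegree_zero]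
          exact Nat.zero_le _
      have hlt_deg : (dR cs (u * σ i) ω).degree < (X * dR cs u ω).degree :=
        degree_lt_degree (by omega)
      rw [dR_concat_of_not_isRightDescent cs ω h]
      refine ⟨hXmon.add_of_right hlt_deg, ?_⟩
      rw [natDegree_add_eq_right_of_degree_lt hlt_deg, hXdeg]
      omega

end DiagrammaticR

/-- For `u ≤ v` in the Bruhat order and `w` a reduced word for `v`, the diagrammatic
R̃-polynomial `𝓡_{u,w}` is monic of degree `ℓ(v) − ℓ(u)`. -/
theorem dR_monic_of_bruhatLE (cs : CoxeterSystem M W) (u v : W) (huv : BruhatLE cs u v)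
    (w : List B) (hw : IsReducedWordFor cs w v) :
    (dR cs u w).Monic ∧ (dR cs u w).natDegree = cs.length v - cs.length u := by
  obtain ⟨w₀, w₀', ⟨hw₀, hlen₀⟩, hsub, hw₀', -⟩ := huv
  have hred₀ : cs.IsReduced w₀ := by rw [CoxeterSystem.IsReduced, hw₀, hlen₀]
  have hchain : cs.BruhatChain u v :=
    hw₀ ▸ cs.bruhatChain_of_mem_subwordProds hred₀ ⟨w₀', hsub, hw₀'⟩
  rw [← hw.2]
  exact dR_monic_of_mem_subwordProds cs (cs.mem_subwordProds_of_bruhatChain hchain hw.1)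
end
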